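/- arXiv:1508.04400 — 2 statements merged into one kernel-verified Lean document; each statement's English description precedes it below -/
import Mathlib

section
/- Let F be a free group and R, S normal subgroups of F. There is an isomorphism of abelian groups (R/R') ⊗_ℤ (S/S') ≅ 𝔯𝔰/𝔯𝔣𝔰 sending the elementary tensor (rR') ⊗ (sS') to the class of (r−1)(s−1) modulo 𝔯𝔣𝔰, for r ∈ R, s ∈ S. -/
/-!
The map `(r, s) ↦ (r - 1)(s - 1)` into `ℤ[F]/𝔯𝔣𝔰` is additive in each variable, since for instance
`(r₁r₂ - 1)(s - 1) - (r₁ - 1)(s - 1) - (r₂ - 1)(s - 1) = (r₁ - 1)(r₂ - 1)(s - 1) ∈ 𝔯𝔣𝔰`; so it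
induces a map `R_ab ⊗ S_ab → ℤ[F]/𝔯𝔣𝔰`. Its image is the image of `𝔯𝔰`, because `𝔯` is spanned by
the `(r - 1)f`, `𝔰` by the `h(s - 1)`, and `(r - 1)fh(s - 1) ≡ (r - 1)(s - 1)` modulo `𝔯𝔣𝔰`.

For injectivity, `S` is free by Nielsen–Schreier, say on `X`, so that `R_ab ⊗ S_ab ≅ ⊕_X R_ab`, and
each coordinate can be read off on `ℤ[F]/𝔯𝔣𝔰`. Using coset representatives, the Fox derivative
`∂/∂x : S → ℤ[F]` extends to an additive `D_x` on `ℤ[F]` with `D_x(v(s - 1)) = v ∂s/∂x`, and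
`rt ↦ [r]` (for `t` a representative of `Rt`) extends to an additive `ℤ[F] → R_ab` sending `(r - 1)v`
to `ε(v)[r]`, where `ε` is the augmentation. Their composite kills `𝔯𝔣𝔰` and sends `(r - 1)(s - 1)` to `ε(∂s/∂x)[r]`, which is the
`x`-coordinate of `[r] ⊗ [s]`.
-/

open MonoidAlgebra TensorProduct

/-- For a subgroup `G` of `F`, the two-sided ideal of the integral group ring `ℤ[F]`
generated by `{g - 1 : g ∈ G}`, realized as the `ℤ`-span of `{f₁ (g-1) f₂}`. -/
noncomputable def relIdeal (F : Type) [Group F] (G : Subgroup F) : Submodule ℤ (MonoidAlgebra ℤ F) :=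
  Submodule.span ℤ {x | ∃ f₁ f₂ : F, ∃ g ∈ G, x = of ℤ F f₁ * (of ℤ F g - 1) * of ℤ F f₂}

noncomputable section

namespace Abelianization

variable {G H A : Type*} [Group G] [Group H] [AddCommGroup A]

theorem exists_ofMul_of (m : Additive (Abelianization G)) :
    ∃ g : G, Additive.ofMul (of g) = m :=
  QuotientGroup.mk_surjective m.toMul

theorem tensor_induction_on
    {motive : Additive (Abelianization G) ⊗[ℤ] Additive (Abelianization H) → Prop}
    (w : Additive (Abelianization G) ⊗[ℤ] Additive (Abelianization H)) (zero : motive 0)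
    (tmul : ∀ g h, motive (Additive.ofMul (of g) ⊗ₜ Additive.ofMul (of h)))
    (add : ∀ u v, motive u → motive v → motive (u + v)) : motive w := by
  induction w using TensorProduct.induction_on with
  | zero => exact zero
  | tmul m n =>
    obtain ⟨g, rfl⟩ := exists_ofMul_of m
    obtain ⟨h, rfl⟩ := exists_ofMul_of n
    exact tmul g h
  | add u v hu hv => exact add u v hu hv

def tensorLift (φ : G → H → A) (hG : ∀ g₁ g₂ h, φ (g₁ * g₂) h = φ g₁ h + φ g₂ h)
    (hH : ∀ g h₁ h₂, φ g (h₁ * h₂) = φ g h₁ + φ g h₂) :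
    Additive (Abelianization G) ⊗[ℤ] Additive (Abelianization H) →ₗ[ℤ] A :=
  let right (g : G) : Additive (Abelianization H) →+ A :=
    MonoidHom.toAdditiveLeft <| lift <| MonoidHom.mk' (fun h ↦ .ofAdd (φ g h)) (hH g)
  let left : G →* Multiplicative (Additive (Abelianization H) →+ A) :=
    MonoidHom.mk' (fun g ↦ .ofAdd (right g)) fun g₁ g₂ ↦ by
      ext h
      exact hG g₁ g₂ h
  (liftAddHom (MonoidHom.toAdditiveLeft (lift left)) fun n m p ↦ by
    simp only [map_zsmul, AddMonoidHom.coe_smul, Pi.smul_apply]).toIntLinearMap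

theorem tensorLift_tmul (φ : G → H → A) (hG : ∀ g₁ g₂ h, φ (g₁ * g₂) h = φ g₁ h + φ g₂ h)
    (hH : ∀ g h₁ h₂, φ g (h₁ * h₂) = φ g h₁ + φ g h₂) (g : G) (h : H) :
    tensorLift φ hG hH (Additive.ofMul (of g) ⊗ₜ Additive.ofMul (of h)) = φ g h :=
  rfl

end Abelianization

section GroupRing

variable {F : Type*} [Group F]

def augmentation : MonoidAlgebra ℤ F →ₐ[ℤ] ℤ := MonoidAlgebra.lift ℤ ℤ F 1

@[simp]
theorem augmentation_of (f : F) : augmentation (of ℤ F f) = 1 := by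
  simp [augmentation]

end GroupRing

section RelIdeal

variable {F : Type} [Group F]

theorem augmentation_eq_zero_of_mem_relIdeal {G : Subgroup F} {a : MonoidAlgebra ℤ F}
    (ha : a ∈ relIdeal F G) : augmentation a = 0 := by
  induction ha using Submodule.span_induction with
  | mem x hx =>
    obtain ⟨f₁, f₂, g, -, rfl⟩ := hx
    simp only [map_mul, map_sub, augmentation_of, map_one, sub_self, mul_zero, zero_mul]
  | zero => simp
  | add x y _ _ hx hy => simp [hx, hy]
  | smul n x _ hx => simp [hx]

theorem sub_one_mem_relIdeal {G : Subgroup F} {g : F} (hg : g ∈ G) :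
    of ℤ F g - 1 ∈ relIdeal F G :=
  Submodule.subset_span ⟨1, 1, g, hg, by rw [map_one, one_mul, mul_one]⟩

theorem relIdeal_eq_span_sub_one_mul (G : Subgroup F) [G.Normal] :
    relIdeal F G = Submodule.span ℤ {x | ∃ g ∈ G, ∃ f : F, x = (of ℤ F g - 1) * of ℤ F f} := by
  refine Submodule.span_eq_span ?_ ?_
  · rintro _ ⟨f₁, f₂, g, hg, rfl⟩
    refine Submodule.subset_span ⟨f₁ * g * f₁⁻¹, ‹G.Normal›.conj_mem g hg f₁, f₁ * f₂, ?_⟩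
    simp only [mul_sub, sub_mul, ← map_mul, mul_assoc, mul_one, one_mul, inv_mul_cancel_left]
  · rintro _ ⟨g, hg, f, rfl⟩
    exact Submodule.subset_span ⟨1, f, g, hg, by rw [map_one, one_mul]⟩

theorem relIdeal_eq_span_mul_sub_one (G : Subgroup F) [G.Normal] :
    relIdeal F G = Submodule.span ℤ {x | ∃ f : F, ∃ g ∈ G, x = of ℤ F f * (of ℤ F g - 1)} := by
  refine Submodule.span_eq_span ?_ ?_
  · rintro _ ⟨f₁, f₂, g, hg, rfl⟩
    refine Submodule.subset_span ⟨f₁ * f₂, f₂⁻¹ * g * f₂, ?_, ?_⟩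
    · simpa using ‹G.Normal›.conj_mem g hg f₂⁻¹
    simp only [mul_sub, sub_mul, ← map_mul, mul_assoc, mul_one, mul_inv_cancel_left]
  · rintro _ ⟨f, g, hg, rfl⟩
    exact Submodule.subset_span ⟨f, 1, g, hg, by rw [map_one, mul_one]⟩

end RelIdeal

section TensorMap

variable {F : Type} [Group F] (R S : Subgroup F)

theorem sub_one_mul_sub_one_mul_sub_one_mem {r s : F} (hr : r ∈ R) (f : F) (hs : s ∈ S) :
    (of ℤ F r - 1) * (of ℤ F f - 1) * (of ℤ F s - 1) ∈
      relIdeal F R * relIdeal F ⊤ * relIdeal F S :=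
  Submodule.mul_mem_mul (Submodule.mul_mem_mul (sub_one_mem_relIdeal hr)
    (sub_one_mem_relIdeal (Subgroup.mem_top f))) (sub_one_mem_relIdeal hs)

def tensorMap : Additive (Abelianization R) ⊗[ℤ] Additive (Abelianization S) →ₗ[ℤ]
    MonoidAlgebra ℤ F ⧸ (relIdeal F R * relIdeal F ⊤ * relIdeal F S) :=
  Abelianization.tensorLift
    (fun (r : R) (s : S) ↦ Submodule.Quotient.mk ((of ℤ F r - 1) * (of ℤ F s - 1)))
    (fun r₁ r₂ s ↦ by
      rw [← Submodule.Quotient.mk_add, Submodule.Quotient.eq]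
      convert sub_one_mul_sub_one_mul_sub_one_mem R S r₁.2 r₂ s.2 using 1
      simp only [Subgroup.coe_mul, map_mul]
      noncomm_ring)
    (fun r s₁ s₂ ↦ by
      rw [← Submodule.Quotient.mk_add, Submodule.Quotient.eq]
      convert sub_one_mul_sub_one_mul_sub_one_mem R S r.2 s₁ s₂.2 using 1
      simp only [Subgroup.coe_mul, map_mul]
      noncomm_ring)

theorem tensorMap_tmul (r : R) (s : S) :
    tensorMap R S (Additive.ofMul (Abelianization.of r) ⊗ₜ Additive.ofMul (Abelianization.of s)) =
      Submodule.Quotient.mk ((of ℤ F r - 1) * (of ℤ F s - 1)) :=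
  Abelianization.tensorLift_tmul _ _ _ r s

theorem range_tensorMap [R.Normal] [S.Normal] :
    LinearMap.range (tensorMap R S) =
      (relIdeal F R * relIdeal F S).map (relIdeal F R * relIdeal F ⊤ * relIdeal F S).mkQ := by
  apply le_antisymm
  · rintro _ ⟨w, rfl⟩
    induction w using Abelianization.tensor_induction_on with
    | zero => simp
    | tmul r s =>
      rw [tensorMap_tmul]
      exact Submodule.mem_map_of_mem
        (Submodule.mul_mem_mul (sub_one_mem_relIdeal r.2) (sub_one_mem_relIdeal s.2))
    | add u v hu hv => simpa using add_mem hu hv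
  · rintro _ ⟨z, hz, rfl⟩
    rw [relIdeal_eq_span_sub_one_mul R, relIdeal_eq_span_mul_sub_one S,
      Submodule.span_mul_span] at hz
    refine (Submodule.span_le (p := (LinearMap.range (tensorMap R S)).comap (Submodule.mkQ _))).mpr
      ?_ hz
    rintro _ ⟨_, ⟨r, hr, f, rfl⟩, _, ⟨h, s, hs, rfl⟩, rfl⟩
    refine ⟨.ofMul (.of ⟨r, hr⟩) ⊗ₜ .ofMul (.of ⟨s, hs⟩), ?_⟩
    rw [tensorMap_tmul, Submodule.mkQ_apply, Submodule.Quotient.eq]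
    convert neg_mem (sub_one_mul_sub_one_mul_sub_one_mem R S hr (f * h) hs) using 1
    simp only [map_mul]
    noncomm_ring

end TensorMap

section Transversal

variable {G : Type*} [Group G] (N : Subgroup G)

def rightPart (g : G) : N :=
  ⟨(g : G ⧸ N).out⁻¹ * g, QuotientGroup.eq.mp (QuotientGroup.out_eq' _)⟩

theorem out_mul_rightPart (g : G) : (g : G ⧸ N).out * rightPart N g = g :=
  mul_inv_cancel_left _ _

theorem rightPart_mul {g n : G} (hn : n ∈ N) : rightPart N (g * n) = rightPart N g * ⟨n, hn⟩ := by
  ext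
  simp [rightPart, QuotientGroup.mk_mul_of_mem g hn, mul_assoc]

variable [N.Normal]

def leftPart (g : G) : N :=
  ⟨g * (g : G ⧸ N).out⁻¹, by
    simpa only [div_eq_mul_inv] using
      QuotientGroup.eq_iff_div_mem.mp (QuotientGroup.out_eq' (g : G ⧸ N)).symm⟩

theorem leftPart_mul {n g : G} (hn : n ∈ N) : leftPart N (n * g) = ⟨n, hn⟩ * leftPart N g := by
  have : ((n * g : G) : G ⧸ N) = g := by
    rw [QuotientGroup.mk_mul, (QuotientGroup.eq_one_iff n).mpr hn, one_mul]
  ext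
  simp [leftPart, this, mul_assoc]

end Transversal

section Fox

variable {F : Type*} [Group F]

def leftMulAut : F →* MulAut (Multiplicative (MonoidAlgebra ℤ F)) :=
  (MulAutMultiplicative _).symm.toMonoidHom.comp
    (AddAut.mulLeft.comp ((Units.map (of ℤ F)).comp (toUnits : F ≃* Fˣ).toMonoidHom))

variable (S : Subgroup F) [IsFreeGroup S] (x : IsFreeGroup.Generators S)

/-- A derivation `S → ℤ[F]` over the inclusion is the same as a homomorphism `S → ℤ[F] ⋊ F`
lifting it, and on the free group `S` such a homomorphism is prescribed on the generators. -/
def foxHom : S →* Multiplicative (MonoidAlgebra ℤ F) ⋊[leftMulAut] F :=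
  IsFreeGroup.lift fun y ↦ ⟨.ofAdd (Finsupp.single y 1 x : ℤ), (IsFreeGroup.of y : S)⟩

theorem foxHom_right (s : S) : (foxHom S x s).right = s := by
  have : SemidirectProduct.rightHom.comp (foxHom S x) = S.subtype :=
    IsFreeGroup.ext_hom fun y ↦ by simp [foxHom]
  exact DFunLike.congr_fun this s

def foxDeriv (s : S) : MonoidAlgebra ℤ F := (foxHom S x s).left.toAdd

theorem foxDeriv_mul (u v : S) :
    foxDeriv S x (u * v) = foxDeriv S x u + of ℤ F u * foxDeriv S x v := by
  simp only [foxDeriv, map_mul, SemidirectProduct.mul_left, foxHom_right]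
  rfl

theorem foxDeriv_of (y : IsFreeGroup.Generators S) :
    foxDeriv S x (IsFreeGroup.of y) = (Finsupp.single y 1 x : ℤ) := by
  simp [foxDeriv, foxHom]

/-- Since `ℤ[F]` is a free right `ℤ[S]`-module on coset representatives `t`, the Fox derivative
extends to `ℤ[F]` by `t s ↦ t ∂s/∂x`. -/
def foxDerivLinear : MonoidAlgebra ℤ F →ₗ[ℤ] MonoidAlgebra ℤ F :=
  (MonoidAlgebra.basis F ℤ).constr ℤ fun f ↦
    of ℤ F (f : F ⧸ S).out * foxDeriv S x (rightPart S f)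

theorem foxDerivLinear_of (f : F) :
    foxDerivLinear S x (of ℤ F f) = of ℤ F (f : F ⧸ S).out * foxDeriv S x (rightPart S f) :=
  (MonoidAlgebra.basis F ℤ).constr_basis ℤ _ f

theorem foxDerivLinear_mul_sub_one (v : MonoidAlgebra ℤ F) {s : F} (hs : s ∈ S) :
    foxDerivLinear S x (v * (of ℤ F s - 1)) = v * foxDeriv S x ⟨s, hs⟩ := by
  induction v using MonoidAlgebra.induction_on with
  | of f =>
    rw [mul_sub, mul_one, ← map_mul, map_sub, foxDerivLinear_of, foxDerivLinear_of,
      rightPart_mul S hs, foxDeriv_mul, QuotientGroup.mk_mul_of_mem f hs, mul_add, ← mul_assoc,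
      ← map_mul, out_mul_rightPart, add_sub_cancel_left]
  | add u v hu hv => rw [add_mul, map_add, hu, hv, add_mul]
  | smul n v hv => rw [smul_mul_assoc, map_smul, hv, smul_mul_assoc]

end Fox

section Coordinates

variable {F : Type*} [Group F] (S : Subgroup F) [IsFreeGroup S]

def abelianizationEquivFinsupp :
    Additive (Abelianization S) ≃ₗ[ℤ] (IsFreeGroup.Generators S →₀ ℤ) :=
  (MulEquiv.toAdditive (IsFreeGroup.toFreeGroup S).abelianizationCongr |>.trans
    (FreeAbelianGroup.equivFinsupp _)).toIntLinearEquiv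

theorem abelianizationEquivFinsupp_of (y : IsFreeGroup.Generators S) :
    abelianizationEquivFinsupp S (.ofMul (.of (IsFreeGroup.of y))) = Finsupp.single y 1 := by
  change FreeAbelianGroup.toFinsupp (.ofMul (.of ((IsFreeGroup.mulEquiv S).symm
    (IsFreeGroup.mulEquiv S (FreeGroup.of y))))) = _
  rw [MulEquiv.symm_apply_apply]
  exact FreeAbelianGroup.toFinsupp_of y

theorem abelianizationEquivFinsupp_apply_eq_augmentation (s : S) (x : IsFreeGroup.Generators S) :
    abelianizationEquivFinsupp S (.ofMul (.of s)) x = augmentation (foxDeriv S x s) := by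
  let lhs : S →* Multiplicative ℤ :=
    MonoidHom.mk' (fun s ↦ .ofAdd (abelianizationEquivFinsupp S (.ofMul (.of s)) x))
      fun u v ↦ by simp [ofAdd_add]
  let rhs : S →* Multiplicative ℤ :=
    MonoidHom.mk' (fun s ↦ .ofAdd (augmentation (foxDeriv S x s)))
      fun u v ↦ by rw [foxDeriv_mul, map_add, map_mul, augmentation_of, one_mul, ofAdd_add]
  have : lhs = rhs := IsFreeGroup.ext_hom fun y ↦ by
    simp [lhs, rhs, abelianizationEquivFinsupp_of, foxDeriv_of]
  exact congrArg Multiplicative.toAdd (DFunLike.congr_fun this s)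

end Coordinates

section Injectivity

variable {F : Type} [Group F] (R S : Subgroup F) [R.Normal]

def leftPartAb : MonoidAlgebra ℤ F →ₗ[ℤ] Additive (Abelianization R) :=
  (MonoidAlgebra.basis F ℤ).constr ℤ fun f ↦ .ofMul (.of (leftPart R f))

theorem leftPartAb_of (f : F) : leftPartAb R (of ℤ F f) = .ofMul (.of (leftPart R f)) :=
  (MonoidAlgebra.basis F ℤ).constr_basis ℤ _ f

theorem leftPartAb_sub_one_mul {r : F} (hr : r ∈ R) (v : MonoidAlgebra ℤ F) :
    leftPartAb R ((of ℤ F r - 1) * v) = augmentation v • .ofMul (.of ⟨r, hr⟩) := by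
  induction v using MonoidAlgebra.induction_on with
  | of f =>
    rw [sub_mul, one_mul, ← map_mul, map_sub, leftPartAb_of, leftPartAb_of, leftPart_mul R hr,
      map_mul, ofMul_mul, add_sub_cancel_right, augmentation_of, one_smul]
  | add u v hu hv => rw [mul_add, map_add, hu, hv, map_add, add_smul]
  | smul n v hv => rw [mul_smul_comm, map_smul, hv, map_smul, smul_assoc]

variable [S.Normal] [IsFreeGroup S]

theorem relIdeal_mul_top_mul_le_ker (x : IsFreeGroup.Generators S) :
    relIdeal F R * relIdeal F ⊤ * relIdeal F S ≤
      LinearMap.ker (leftPartAb R ∘ₗ foxDerivLinear S x) := by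
  rw [relIdeal_eq_span_sub_one_mul R, relIdeal_eq_span_mul_sub_one S, relIdeal,
    Submodule.span_mul_span, Submodule.span_mul_span, Submodule.span_le]
  rintro _ ⟨_, ⟨_, ⟨r, hr, f, rfl⟩, b, hb, rfl⟩, _, ⟨h, s, hs, rfl⟩, rfl⟩
  have hεb : augmentation b = 0 := augmentation_eq_zero_of_mem_relIdeal (Submodule.subset_span hb)
  calc leftPartAb R (foxDerivLinear S x
          ((of ℤ F r - 1) * of ℤ F f * b * (of ℤ F h * (of ℤ F s - 1))))
      _ = leftPartAb R ((of ℤ F r - 1) * (of ℤ F f * b * of ℤ F h * foxDeriv S x ⟨s, hs⟩)) := by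
        simp only [← mul_assoc, foxDerivLinear_mul_sub_one S x _ hs]
      _ = 0 := by simp only [leftPartAb_sub_one_mul R hr, map_mul, hεb, mul_zero, zero_mul,
        zero_smul]

def quotientCoord (x : IsFreeGroup.Generators S) :
    MonoidAlgebra ℤ F ⧸ (relIdeal F R * relIdeal F ⊤ * relIdeal F S) →ₗ[ℤ]
      Additive (Abelianization R) :=
  Submodule.liftQ _ (leftPartAb R ∘ₗ foxDerivLinear S x) (relIdeal_mul_top_mul_le_ker R S x)

theorem quotientCoord_tensorMap_tmul (x : IsFreeGroup.Generators S) (r : R) (s : S) :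
    quotientCoord R S x (tensorMap R S (.ofMul (.of r) ⊗ₜ .ofMul (.of s))) =
      augmentation (foxDeriv S x s) • .ofMul (.of r) := by
  rw [tensorMap_tmul, quotientCoord, Submodule.liftQ_apply, LinearMap.comp_apply,
    foxDerivLinear_mul_sub_one S x _ s.2, leftPartAb_sub_one_mul R r.2]

theorem tensorMap_injective : Function.Injective (tensorMap R S) := by
  classical
  let C := TensorProduct.congr (LinearEquiv.refl ℤ (Additive (Abelianization R)))
    (abelianizationEquivFinsupp S)
  let E := finsuppScalarRight ℤ ℤ (Additive (Abelianization R)) (IsFreeGroup.Generators S)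
  have hcoord (w) (x) : quotientCoord R S x (tensorMap R S w) = E (C w) x := by
    induction w using Abelianization.tensor_induction_on with
    | zero => simp
    | tmul r s =>
      simp [C, E, quotientCoord_tensorMap_tmul, finsuppScalarRight_apply_tmul_apply,
        abelianizationEquivFinsupp_apply_eq_augmentation]
    | add u v hu hv => simp [hu, hv]
  intro w w' h
  refine C.injective (E.injective (Finsupp.ext fun x ↦ ?_))
  rw [← hcoord, ← hcoord, h]

end Injectivity

theorem stmt3 (F : Type) [Group F] [IsFreeGroup F] (R S : Subgroup F)
    [R.Normal] [S.Normal] :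
    ∃ e : (Additive (Abelianization R)) ⊗[ℤ] (Additive (Abelianization S)) ≃+
        ((relIdeal F R * relIdeal F S).map
          (relIdeal F R * relIdeal F ⊤ * relIdeal F S).mkQ),
      ∀ (r : F) (hr : r ∈ R) (s : F) (hs : s ∈ S),
        ((e (Additive.ofMul (Abelianization.of ⟨r, hr⟩) ⊗ₜ[ℤ]
              Additive.ofMul (Abelianization.of ⟨s, hs⟩)) :
            MonoidAlgebra ℤ F ⧸ (relIdeal F R * relIdeal F ⊤ * relIdeal F S))) =
          Submodule.Quotient.mk ((of ℤ F r - 1) * (of ℤ F s - 1)) :=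
  ⟨((LinearEquiv.ofInjective _ (tensorMap_injective R S)).trans
      (LinearEquiv.ofEq _ _ (range_tensorMap R S))).toAddEquiv,
    fun r hr s hs ↦ tensorMap_tmul R S ⟨r, hr⟩ ⟨s, hs⟩⟩
end
end

section
/- Let F be a free group and R, S normal subgroups of F. Suppose x, y ∈ R∩S, m ≥ 2, x^m = x₁x₂ and y^m = y₁y₂ with x₁, y₁ ∈ R'∩S and x₂, y₂ ∈ R∩S'. Then [x₁,y]·[x,y₂]⁻¹ − 1 ∈ 𝔯𝔣𝔰; in particular the element [x₁,y]·[x,y₂]⁻¹ lies in F ∩ (1 + 𝔯𝔣𝔰). -/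
/-!
Write `δ g = g - 1`. In any group ring `[a, b] - 1 = a⁻¹b⁻¹ (δa δb - δb δa)`, and `δg ∈ 𝔤²` for
`g ∈ G'`. Modulo `𝔯𝔣𝔰`, in `[x₁, y] - 1` the term `δx₁ δy` vanishes since `δx₁ ∈ 𝔯²`; in
`δy δx₁` one may replace `δx₁` by `m δx`, because `x₁ = x^m x₂⁻¹` with `δx₂⁻¹ ∈ 𝔰²` and
`δ(x^m) ≡ m δx` modulo `𝔣𝔰`; and the prefactor `x₁⁻¹y⁻¹ ∈ R` may be dropped. So
`[x₁, y] ≡ 1 - m δy δx`, and symmetrically `[x, y₂] ≡ 1 - m δy δx`.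
-/

open MonoidAlgebra

open scoped commutatorElement


theorem Submodule.mul_mem_mul_mul {R A : Type*} [CommSemiring R] [Semiring A] [Algebra R A]
    {M N P : Submodule R A} {a b : A} (ha : a ∈ M) (hb : b ∈ N * P) : a * b ∈ M * N * P := by
  rw [mul_assoc]; exact Submodule.mul_mem_mul ha hb

theorem MonoidAlgebra.span_range_of {k G : Type*} [Semiring k] [MulOneClass G] :
    Submodule.span k (Set.range (of k G)) = ⊤ :=
  eq_top_iff.2 fun f _ =>
    Submodule.span_mono (Set.image_subset_range _ _) (mem_span_support_coeff f)

section

variable {F : Type} [Group F]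

noncomputable def ofSubOne (g : F) : MonoidAlgebra ℤ F := of ℤ F g - 1

theorem ofSubOne_one : ofSubOne (1 : F) = 0 := by rw [ofSubOne, map_one, sub_self]

theorem ofSubOne_mul (a b : F) : ofSubOne (a * b) = ofSubOne a * of ℤ F b + ofSubOne b := by
  simp only [ofSubOne, map_mul]; noncomm_ring

theorem ofSubOne_mul' (a b : F) : ofSubOne (a * b) = of ℤ F a * ofSubOne b + ofSubOne a := by
  simp only [ofSubOne, map_mul]; noncomm_ring

theorem ofSubOne_inv (a : F) : ofSubOne a⁻¹ = -(ofSubOne a * of ℤ F a⁻¹) := by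
  simp only [ofSubOne, sub_mul, one_mul, ← map_mul, mul_inv_cancel, map_one, neg_sub]

theorem of_commutator_sub_one (a b : F) :
    of ℤ F (a⁻¹ * b⁻¹ * a * b) - 1 =
      of ℤ F (a⁻¹ * b⁻¹) * ofSubOne a * ofSubOne b
        - of ℤ F (a⁻¹ * b⁻¹) * ofSubOne b * ofSubOne a := by
  have hba : of ℤ F (a⁻¹ * b⁻¹) * of ℤ F b * of ℤ F a = 1 := by
    rw [← map_mul, ← map_mul, show a⁻¹ * b⁻¹ * b * a = 1 by group, map_one]
  calc of ℤ F (a⁻¹ * b⁻¹ * a * b) - 1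
      = of ℤ F (a⁻¹ * b⁻¹) * of ℤ F a * of ℤ F b - of ℤ F (a⁻¹ * b⁻¹) * of ℤ F b * of ℤ F a := by
        rw [hba, map_mul, map_mul]
    _ = _ := by simp only [ofSubOne]; noncomm_ring

theorem ofSubOne_mem_relIdeal {G : Subgroup F} {g : F} (hg : g ∈ G) :
    ofSubOne g ∈ relIdeal F G :=
  Submodule.subset_span ⟨1, 1, g, hg, by rw [map_one, one_mul, mul_one, ofSubOne]⟩

theorem relIdeal_mono {G H : Subgroup F} (h : G ≤ H) : relIdeal F G ≤ relIdeal F H :=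
  Submodule.span_mono fun _ ⟨f₁, f₂, g, hg, hx⟩ => ⟨f₁, f₂, g, h hg, hx⟩

theorem top_mul_relIdeal_le (G : Subgroup F) : ⊤ * relIdeal F G ≤ relIdeal F G := by
  rw [← MonoidAlgebra.span_range_of, relIdeal, Submodule.span_mul_span]
  refine Submodule.span_le.2 ?_
  rintro _ ⟨_, ⟨f, rfl⟩, _, ⟨f₁, f₂, g, hg, rfl⟩, rfl⟩
  exact Submodule.subset_span ⟨f * f₁, f₂, g, hg, by simp only [map_mul, mul_assoc]⟩

theorem relIdeal_mul_top_le (G : Subgroup F) : relIdeal F G * ⊤ ≤ relIdeal F G := by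
  rw [← MonoidAlgebra.span_range_of, relIdeal, Submodule.span_mul_span]
  refine Submodule.span_le.2 ?_
  rintro _ ⟨_, ⟨f₁, f₂, g, hg, rfl⟩, _, ⟨f, rfl⟩, rfl⟩
  exact Submodule.subset_span ⟨f₁, f₂ * f, g, hg, by simp only [map_mul, mul_assoc]⟩

theorem mul_mem_relIdeal_left {G : Subgroup F} (a : MonoidAlgebra ℤ F)
    {b : MonoidAlgebra ℤ F} (hb : b ∈ relIdeal F G) : a * b ∈ relIdeal F G :=
  top_mul_relIdeal_le G (Submodule.mul_mem_mul Submodule.mem_top hb)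

theorem mul_mem_relIdeal_mul_left {G : Subgroup F} {N : Submodule ℤ (MonoidAlgebra ℤ F)}
    (a : MonoidAlgebra ℤ F) {b : MonoidAlgebra ℤ F} (hb : b ∈ relIdeal F G * N) :
    a * b ∈ relIdeal F G * N := by
  have h := Submodule.mul_mem_mul (Submodule.mem_top (x := a)) hb
  rw [← mul_assoc] at h
  exact mul_le_mul' (top_mul_relIdeal_le G) le_rfl h

theorem mul_mem_mul_relIdeal_right {G : Subgroup F} {M : Submodule ℤ (MonoidAlgebra ℤ F)}
    (a : MonoidAlgebra ℤ F) {b : MonoidAlgebra ℤ F} (hb : b ∈ M * relIdeal F G) :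
    b * a ∈ M * relIdeal F G := by
  have h := Submodule.mul_mem_mul hb (Submodule.mem_top (x := a))
  rw [mul_assoc] at h
  exact mul_le_mul' le_rfl (relIdeal_mul_top_le G) h

theorem ofSubOne_mem_relIdeal_mul_relIdeal {G : Subgroup F} {g : F} (hg : g ∈ ⁅G, G⁆) :
    ofSubOne g ∈ relIdeal F G * relIdeal F G := by
  rw [Subgroup.commutator_def] at hg
  induction hg using Subgroup.closure_induction with
  | mem _ h =>
    obtain ⟨p, hp, q, hq, rfl⟩ := h
    have hpq : ⁅p, q⁆ = p⁻¹⁻¹ * q⁻¹⁻¹ * p⁻¹ * q⁻¹ := by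
      simp only [commutatorElement_def, inv_inv]
    have mem {a b : F} (ha : a ∈ G) (hb : b ∈ G) :
        of ℤ F (p * q) * ofSubOne a * ofSubOne b ∈ relIdeal F G * relIdeal F G :=
      Submodule.mul_mem_mul (mul_mem_relIdeal_left _ (ofSubOne_mem_relIdeal ha))
        (ofSubOne_mem_relIdeal hb)
    rw [ofSubOne, hpq, of_commutator_sub_one, inv_inv, inv_inv]
    exact sub_mem (mem (inv_mem hp) (inv_mem hq)) (mem (inv_mem hq) (inv_mem hp))
  | one => rw [ofSubOne_one]; exact zero_mem _
  | mul a b _ _ ha hb =>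
    rw [ofSubOne_mul]; exact add_mem (mul_mem_mul_relIdeal_right _ ha) hb
  | inv a _ ha => rw [ofSubOne_inv]; exact neg_mem (mul_mem_mul_relIdeal_right _ ha)

theorem ofSubOne_pow_sub_nsmul_mem_top_mul {G : Subgroup F} {g : F} (hg : g ∈ G) (n : ℕ) :
    ofSubOne (g ^ n) - n • ofSubOne g ∈ relIdeal F ⊤ * relIdeal F G := by
  induction n with
  | zero => rw [pow_zero, ofSubOne_one, zero_smul, sub_zero]; exact zero_mem _
  | succ n ih =>
    have e : ofSubOne (g ^ (n + 1)) - (n + 1) • ofSubOne g =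
        (ofSubOne (g ^ n) - n • ofSubOne g) + ofSubOne (g ^ n) * ofSubOne g := by
      rw [pow_succ, ofSubOne_mul, succ_nsmul]; simp only [ofSubOne]; noncomm_ring
    rw [e]
    exact add_mem ih
      (Submodule.mul_mem_mul (ofSubOne_mem_relIdeal trivial) (ofSubOne_mem_relIdeal hg))

theorem ofSubOne_pow_sub_nsmul_mem_mul_top {G : Subgroup F} {g : F} (hg : g ∈ G) (n : ℕ) :
    ofSubOne (g ^ n) - n • ofSubOne g ∈ relIdeal F G * relIdeal F ⊤ := by
  induction n with
  | zero => rw [pow_zero, ofSubOne_one, zero_smul, sub_zero]; exact zero_mem _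
  | succ n ih =>
    have e : ofSubOne (g ^ (n + 1)) - (n + 1) • ofSubOne g =
        (ofSubOne (g ^ n) - n • ofSubOne g) + ofSubOne g * ofSubOne (g ^ n) := by
      rw [pow_succ', ofSubOne_mul', succ_nsmul]; simp only [ofSubOne]; noncomm_ring
    rw [e]
    exact add_mem ih
      (Submodule.mul_mem_mul (ofSubOne_mem_relIdeal hg) (ofSubOne_mem_relIdeal trivial))

theorem ofSubOne_left_factor_sub_nsmul_mem {S : Subgroup F} {x x₁ x₂ : F} {m : ℕ}
    (hx : x ∈ S) (hx₂ : x₂ ∈ ⁅S, S⁆) (h : x ^ m = x₁ * x₂) :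
    ofSubOne x₁ - m • ofSubOne x ∈ relIdeal F ⊤ * relIdeal F S := by
  rw [eq_mul_inv_of_mul_eq h.symm, ofSubOne_mul', add_sub_assoc]
  refine add_mem ?_ (ofSubOne_pow_sub_nsmul_mem_top_mul hx m)
  exact mul_le_mul' (relIdeal_mono le_top) le_rfl
    (mul_mem_relIdeal_mul_left _ (ofSubOne_mem_relIdeal_mul_relIdeal (inv_mem hx₂)))

theorem ofSubOne_right_factor_sub_nsmul_mem {R : Subgroup F} {y y₁ y₂ : F} {m : ℕ}
    (hy : y ∈ R) (hy₁ : y₁ ∈ ⁅R, R⁆) (h : y ^ m = y₁ * y₂) :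
    ofSubOne y₂ - m • ofSubOne y ∈ relIdeal F R * relIdeal F ⊤ := by
  rw [eq_inv_mul_of_mul_eq h.symm, ofSubOne_mul, add_sub_assoc]
  refine add_mem ?_ (ofSubOne_pow_sub_nsmul_mem_mul_top hy m)
  exact mul_le_mul' le_rfl (relIdeal_mono le_top)
    (mul_mem_mul_relIdeal_right _ (ofSubOne_mem_relIdeal_mul_relIdeal (inv_mem hy₁)))

theorem of_mul_ofSubOne_mul_ofSubOne_sub_mem {R S : Subgroup F} {p x : F} (hp : p ∈ R)
    (hx : x ∈ S) (y : F) :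
    of ℤ F p * ofSubOne y * ofSubOne x - ofSubOne y * ofSubOne x ∈
      relIdeal F R * relIdeal F ⊤ * relIdeal F S := by
  have e : of ℤ F p * ofSubOne y * ofSubOne x - ofSubOne y * ofSubOne x =
      ofSubOne p * ofSubOne y * ofSubOne x := by
    simp only [ofSubOne]; noncomm_ring
  rw [e]
  exact Submodule.mul_mem_mul (Submodule.mul_mem_mul (ofSubOne_mem_relIdeal hp)
    (ofSubOne_mem_relIdeal trivial)) (ofSubOne_mem_relIdeal hx)

theorem of_commutator_left_factor_sModEq {R S : Subgroup F} {x y x₁ x₂ : F} {m : ℕ}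
    (hy : y ∈ R ⊓ S) (hx : x ∈ S) (hx₁ : x₁ ∈ ⁅R, R⁆) (hx₂ : x₂ ∈ ⁅S, S⁆)
    (h : x ^ m = x₁ * x₂) :
    of ℤ F (x₁⁻¹ * y⁻¹ * x₁ * y) ≡ 1 - m • (ofSubOne y * ofSubOne x)
      [SMOD relIdeal F R * relIdeal F ⊤ * relIdeal F S] := by
  have hp : x₁⁻¹ * y⁻¹ ∈ R := R.mul_mem (inv_mem (R.commutator_le_self hx₁)) (inv_mem hy.1)
  have h₁ : of ℤ F (x₁⁻¹ * y⁻¹) * ofSubOne x₁ * ofSubOne y ∈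
      relIdeal F R * relIdeal F ⊤ * relIdeal F S :=
    Submodule.mul_mem_mul (mul_le_mul' le_rfl (relIdeal_mono le_top)
        (mul_mem_relIdeal_mul_left _ (ofSubOne_mem_relIdeal_mul_relIdeal hx₁)))
      (ofSubOne_mem_relIdeal hy.2)
  have h₂ : of ℤ F (x₁⁻¹ * y⁻¹) * ofSubOne y * ofSubOne x₁ - m • (ofSubOne y * ofSubOne x) ∈
      relIdeal F R * relIdeal F ⊤ * relIdeal F S := by
    have e : of ℤ F (x₁⁻¹ * y⁻¹) * ofSubOne y * ofSubOne x₁ - m • (ofSubOne y * ofSubOne x) =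
        of ℤ F (x₁⁻¹ * y⁻¹) * ofSubOne y * (ofSubOne x₁ - m • ofSubOne x) +
          m • (of ℤ F (x₁⁻¹ * y⁻¹) * ofSubOne y * ofSubOne x - ofSubOne y * ofSubOne x) := by
      simp only [mul_sub, mul_smul_comm, smul_sub]; abel
    rw [e]
    exact add_mem (Submodule.mul_mem_mul_mul (mul_mem_relIdeal_left _ (ofSubOne_mem_relIdeal hy.1))
        (ofSubOne_left_factor_sub_nsmul_mem hx hx₂ h))
      (nsmul_mem (of_mul_ofSubOne_mul_ofSubOne_sub_mem hp hx y) m)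
  rw [SModEq.sub_mem, ← sub_add, of_commutator_sub_one]
  convert sub_mem h₁ h₂ using 1
  abel

theorem of_commutator_right_factor_sModEq {R S : Subgroup F} {x y y₁ y₂ : F} {m : ℕ}
    (hx : x ∈ R ⊓ S) (hy : y ∈ R) (hy₁ : y₁ ∈ ⁅R, R⁆) (hy₂ : y₂ ∈ R ⊓ ⁅S, S⁆)
    (h : y ^ m = y₁ * y₂) :
    of ℤ F (x⁻¹ * y₂⁻¹ * x * y₂) ≡ 1 - m • (ofSubOne y * ofSubOne x)
      [SMOD relIdeal F R * relIdeal F ⊤ * relIdeal F S] := by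
  have hq : x⁻¹ * y₂⁻¹ ∈ R := R.mul_mem (inv_mem hx.1) (inv_mem hy₂.1)
  have h₁ : of ℤ F (x⁻¹ * y₂⁻¹) * ofSubOne x * ofSubOne y₂ ∈
      relIdeal F R * relIdeal F ⊤ * relIdeal F S :=
    Submodule.mul_mem_mul_mul (mul_mem_relIdeal_left _ (ofSubOne_mem_relIdeal hx.1))
      (mul_le_mul' (relIdeal_mono le_top) le_rfl (ofSubOne_mem_relIdeal_mul_relIdeal hy₂.2))
  have h₂ : of ℤ F (x⁻¹ * y₂⁻¹) * ofSubOne y₂ * ofSubOne x - m • (ofSubOne y * ofSubOne x) ∈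
      relIdeal F R * relIdeal F ⊤ * relIdeal F S := by
    have e : of ℤ F (x⁻¹ * y₂⁻¹) * ofSubOne y₂ * ofSubOne x - m • (ofSubOne y * ofSubOne x) =
        of ℤ F (x⁻¹ * y₂⁻¹) * (ofSubOne y₂ - m • ofSubOne y) * ofSubOne x +
          m • (of ℤ F (x⁻¹ * y₂⁻¹) * ofSubOne y * ofSubOne x - ofSubOne y * ofSubOne x) := by
      simp only [mul_sub, sub_mul, mul_smul_comm, smul_mul_assoc, smul_sub]; abel
    rw [e]
    exact add_mem (Submodule.mul_mem_mul (mul_mem_relIdeal_mul_left _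
        (ofSubOne_right_factor_sub_nsmul_mem hy hy₁ h)) (ofSubOne_mem_relIdeal hx.2))
      (nsmul_mem (of_mul_ofSubOne_mul_ofSubOne_sub_mem hq hx.2 y) m)
  rw [SModEq.sub_mem, ← sub_add, of_commutator_sub_one]
  convert sub_mem h₁ h₂ using 1
  abel

end

theorem stmt4_general (F : Type) [Group F] (R S : Subgroup F)
    (x y x₁ x₂ y₁ y₂ : F) (m : ℕ)
    (hx : x ∈ R ⊓ S) (hy : y ∈ R ⊓ S)
    (hx₁ : x₁ ∈ ⁅R, R⁆ ⊓ S) (hy₁ : y₁ ∈ ⁅R, R⁆ ⊓ S)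
    (hx₂ : x₂ ∈ R ⊓ ⁅S, S⁆) (hy₂ : y₂ ∈ R ⊓ ⁅S, S⁆)
    (hxm : x ^ m = x₁ * x₂) (hym : y ^ m = y₁ * y₂) :
    of ℤ F ((x₁⁻¹ * y⁻¹ * x₁ * y) * (x⁻¹ * y₂⁻¹ * x * y₂)⁻¹) - 1 ∈
      relIdeal F R * relIdeal F ⊤ * relIdeal F S := by
  have hu := of_commutator_left_factor_sModEq hy hx.2 hx₁.1 hx₂.2 hxm
  have hv := of_commutator_right_factor_sModEq hx hy.1 hy₁.1 hy₂ hym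
  have e : of ℤ F ((x₁⁻¹ * y⁻¹ * x₁ * y) * (x⁻¹ * y₂⁻¹ * x * y₂)⁻¹) - 1 =
      (of ℤ F (x₁⁻¹ * y⁻¹ * x₁ * y) - of ℤ F (x⁻¹ * y₂⁻¹ * x * y₂)) *
        of ℤ F (x⁻¹ * y₂⁻¹ * x * y₂)⁻¹ := by
    rw [sub_mul, ← map_mul, ← map_mul, mul_inv_cancel, map_one]
  rw [e]
  exact mul_mem_mul_relIdeal_right _ (SModEq.sub_mem.1 (hu.trans hv.symm))

theorem stmt4 (F : Type) [Group F] [IsFreeGroup F] (R S : Subgroup F)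
    [R.Normal] [S.Normal] (x y x₁ x₂ y₁ y₂ : F) (m : ℕ) (hm : 2 ≤ m)
    (hx : x ∈ R ⊓ S) (hy : y ∈ R ⊓ S)
    (hx₁ : x₁ ∈ ⁅R, R⁆ ⊓ S) (hy₁ : y₁ ∈ ⁅R, R⁆ ⊓ S)
    (hx₂ : x₂ ∈ R ⊓ ⁅S, S⁆) (hy₂ : y₂ ∈ R ⊓ ⁅S, S⁆)
    (hxm : x ^ m = x₁ * x₂) (hym : y ^ m = y₁ * y₂) :
    of ℤ F ((x₁⁻¹ * y⁻¹ * x₁ * y) * (x⁻¹ * y₂⁻¹ * x * y₂)⁻¹) - 1 ∈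
      relIdeal F R * relIdeal F ⊤ * relIdeal F S :=
  stmt4_general F R S x y x₁ x₂ y₁ y₂ m hx hy hx₁ hy₁ hx₂ hy₂ hxm hym
end
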